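/- arXiv:1207.6612 — 2 statements merged into one kernel-verified Lean document; each statement's English description precedes it below -/
import Mathlib

section
/- For every function f : V → ℝ and every vertex x ∈ V, the curvature operator satisfies Γ₂(f,f)(x) = (1/4) · (1/d(x)) Σ_y (w(x,y)/d(y)) Σ_z w(y,z) (f(x) − 2 f(y) + f(z))² − (1/2) |∇f|²(x) + (1/2) (Δf(x))². -/
open Finset

/-- The weighted degree `d(x) = Σ_y w(x,y)`. -/
noncomputable def deg {V : Type*} [Fintype V] (w : V → V → ℝ) (x : V) : ℝ :=
  ∑ y, w x y

/-- The graph Laplacian `Δf(x) = (1/d(x)) Σ_y w(x,y) (f(y) − f(x))`. -/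
noncomputable def lap {V : Type*} [Fintype V] (w : V → V → ℝ) (f : V → ℝ) (x : V) : ℝ :=
  (1 / deg w x) * ∑ y, w x y * (f y - f x)

/-- The bilinear operator `Γ(f,g)(x) = (1/2)(Δ(fg)(x) − f(x)Δg(x) − g(x)Δf(x))`. -/
noncomputable def gam {V : Type*} [Fintype V] (w : V → V → ℝ) (f g : V → ℝ) (x : V) : ℝ :=
  (1 / 2) * (lap w (fun y => f y * g y) x - f x * lap w g x - g x * lap w f x)

/-- The curvature operator `Γ₂(f,g)(x) = (1/2)(ΔΓ(f,g)(x) − Γ(f,Δg)(x) − Γ(g,Δf)(x))`. -/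
noncomputable def gam2 {V : Type*} [Fintype V] (w : V → V → ℝ) (f g : V → ℝ) (x : V) : ℝ :=
  (1 / 2) * (lap w (gam w f g) x - gam w f (lap w g) x - gam w g (lap w f) x)

/-- The gradient square `|∇f|²(x) = (1/d(x)) Σ_y w(x,y) (f(x) − f(y))²`. -/
noncomputable def gradsq {V : Type*} [Fintype V] (w : V → V → ℝ) (f : V → ℝ) (x : V) : ℝ :=
  (1 / deg w x) * ∑ y, w x y * (f x - f y) ^ 2

/-- The curvature-dimension inequality `CD(m,κ)`. -/
def CD {V : Type*} [Fintype V] (w : V → V → ℝ) (m κ : ℝ) : Prop :=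
  ∀ (f : V → ℝ) (x : V), gam2 w f f x ≥ (1 / m) * (lap w f x) ^ 2 + κ * gam w f f x

/-!
Write `Γ` in carré-du-champ form
`Γ(f,g)(x) = (1/2d(x)) Σ_y w(x,y) (f(y) − f(x)) (g(y) − g(x))`.
Splitting `f(x) − 2f(y) + f(z) = (f(z) − f(y)) + (f(x) − f(y))` and averaging its square over
the neighbours `z` of `y` turns the inner sum into
`2Γ(f,f)(y) + 2(f(x) − f(y))Δf(y) + (f(x) − f(y))²`.
Both sides of the identity then become the same combination of the averages over `y` of
`Γ(f,f)(y)`, `(f(y) − f(x))Δf(y)` and `(f(x) − f(y))²`, together with `(Δf(x))²`.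
-/

section

variable {V : Type*} [Fintype V] (w : V → V → ℝ)

theorem lap_eq_inv_deg_mul_sum_sub {x : V} (hx : deg w x ≠ 0) (g : V → ℝ) :
    lap w g x = (1 / deg w x) * ∑ y, w x y * g y - g x := by
  rw [lap, deg] at *
  simp only [mul_sub, sum_sub_distrib, ← sum_mul]
  field_simp

theorem gam_eq_inv_deg_mul_sum {x : V} (hx : deg w x ≠ 0) (f g : V → ℝ) :
    gam w f g x = (1 / (2 * deg w x)) * ∑ y, w x y * ((f y - f x) * (g y - g x)) := by
  have hsplit : ∑ y, w x y * (f y * g y - f x * g x)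
      = ∑ y, w x y * ((f y - f x) * (g y - g x))
        + f x * ∑ y, w x y * (g y - g x) + g x * ∑ y, w x y * (f y - f x) := by
    simp only [mul_sum, ← sum_add_distrib]
    exact sum_congr rfl fun y _ => by ring
  rw [gam, lap, lap, lap, hsplit]
  field_simp
  ring

theorem gam_self_eq_half_gradsq {x : V} (hx : deg w x ≠ 0) (f : V → ℝ) :
    gam w f f x = gradsq w f x / 2 := by
  rw [gam_eq_inv_deg_mul_sum w hx, gradsq]
  simp only [← sq, sub_sq_comm (f _) (f x)]
  ring

theorem gam_eq_inv_deg_mul_sum_sub {x : V} (hx : deg w x ≠ 0) (f g : V → ℝ) :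
    gam w f g x =
      (1 / (2 * deg w x)) * ∑ y, w x y * ((f y - f x) * g y) - lap w f x * g x / 2 := by
  have hsplit : ∑ y, w x y * ((f y - f x) * (g y - g x))
      = ∑ y, w x y * ((f y - f x) * g y) - g x * ∑ y, w x y * (f y - f x) := by
    simp only [mul_sum, ← sum_sub_distrib]
    exact sum_congr rfl fun y _ => by ring
  rw [gam_eq_inv_deg_mul_sum w hx, hsplit, lap]
  field_simp

theorem inv_deg_mul_sum_sq_second_diff {y : V} (hy : deg w y ≠ 0) (f : V → ℝ) (c : ℝ) :
    (1 / deg w y) * ∑ z, w y z * (c - 2 * f y + f z) ^ 2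
      = 2 * gam w f f y + 2 * (c - f y) * lap w f y + (c - f y) ^ 2 := by
  rw [gam_eq_inv_deg_mul_sum w hy, lap]
  have hsplit : ∑ z, w y z * (c - 2 * f y + f z) ^ 2
      = ∑ z, w y z * ((f z - f y) * (f z - f y))
        + 2 * (c - f y) * ∑ z, w y z * (f z - f y) + (c - f y) ^ 2 * deg w y := by
    simp only [deg, mul_sum, ← sum_add_distrib]
    exact sum_congr rfl fun z _ => by ring
  rw [hsplit]
  field_simp

end

theorem gamma2_formula_general {V : Type*} [Fintype V] (w : V → V → ℝ)
    (hdeg : ∀ x, 0 < deg w x)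
    (f : V → ℝ) (x : V) :
    gam2 w f f x =
      (1 / 4) * ((1 / deg w x) * ∑ y, (w x y / deg w y) *
        ∑ z, w y z * (f x - 2 * f y + f z) ^ 2) -
      (1 / 2) * gradsq w f x + (1 / 2) * (lap w f x) ^ 2 := by
  have hx : deg w x ≠ 0 := (hdeg x).ne'
  have hsum : ∑ y, (w x y / deg w y) * ∑ z, w y z * (f x - 2 * f y + f z) ^ 2
      = 2 * ∑ y, w x y * gam w f f y - 2 * ∑ y, w x y * ((f y - f x) * lap w f y)
        + ∑ y, w x y * (f x - f y) ^ 2 := by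
    calc _ = ∑ y, (2 * (w x y * gam w f f y) - 2 * (w x y * ((f y - f x) * lap w f y))
            + w x y * (f x - f y) ^ 2) := sum_congr rfl fun y _ => by
          rw [div_eq_mul_one_div, mul_assoc, inv_deg_mul_sum_sq_second_diff w (hdeg y).ne']
          ring
      _ = _ := by simp only [sum_add_distrib, sum_sub_distrib, mul_sum]
  rw [gam2, lap_eq_inv_deg_mul_sum_sub w hx, gam_self_eq_half_gradsq w hx,
    gam_eq_inv_deg_mul_sum_sub w hx f (lap w f), hsum, gradsq]
  field_simp
  ring

theorem gamma2_formula {V : Type*} [Fintype V] (w : V → V → ℝ)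
    (hsymm : ∀ x y, w x y = w y x) (hnonneg : ∀ x y, 0 ≤ w x y)
    (hloop : ∀ x, w x x = 0) (hdeg : ∀ x, 0 < deg w x)
    (f : V → ℝ) (x : V) :
    gam2 w f f x =
      (1 / 4) * ((1 / deg w x) * ∑ y, (w x y / deg w y) *
        ∑ z, w y z * (f x - 2 * f y + f z) ^ 2) -
      (1 / 2) * gradsq w f x + (1 / 2) * (lap w f x) ^ 2 :=
  gamma2_formula_general w hdeg f x
end

section
/- Suppose G is connected and satisfies the curvature-dimension inequality CD(m,κ), and suppose λ is a nontrivial (nonzero) eigenvalue of the Laplacian, i.e., there exists a nonconstant function f : V → ℝ with −Δf(x) = λ f(x) for all x ∈ V. Then κ ≤ λ. -/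
open Finset

/-!
For an eigenfunction, `-Δf = λf`, Bochner's formula reads `Γ₂(f,f) = ½ ΔΓ(f,f) + λ Γ(f,f)`.
At a maximum point `x₀` of `Γ(f,f)` the maximum principle gives `ΔΓ(f,f)(x₀) ≤ 0`, so `CD(m,κ)`
at `x₀` yields `κ Γ(f,f)(x₀) ≤ λ Γ(f,f)(x₀)`. Finally `Γ(f,f)(x₀) > 0`: if `Γ(f,f) = ½|∇f|²`
vanished everywhere, then `Δf ≡ 0`, hence `λf ≡ 0` and `f ≡ 0`, which is not the case.
-/

section

variable {V : Type*} [Fintype V] {w : V → V → ℝ}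

lemma deg_nonneg (hw : ∀ x y, 0 ≤ w x y) (x : V) : 0 ≤ deg w x :=
  Finset.sum_nonneg fun y _ => hw x y

lemma gradsq_nonneg (hw : ∀ x y, 0 ≤ w x y) (f : V → ℝ) (x : V) : 0 ≤ gradsq w f x :=
  mul_nonneg (one_div_nonneg.mpr (deg_nonneg hw x))
    (Finset.sum_nonneg fun y _ => mul_nonneg (hw x y) (sq_nonneg _))

lemma lap_nonpos_of_forall_le (hw : ∀ x y, 0 ≤ w x y) {g : V → ℝ} {x : V}
    (hmax : ∀ y, g y ≤ g x) : lap w g x ≤ 0 :=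
  mul_nonpos_of_nonneg_of_nonpos (one_div_nonneg.mpr (deg_nonneg hw x))
    (Finset.sum_nonpos fun y _ => mul_nonpos_of_nonneg_of_nonpos (hw x y) (sub_nonpos.mpr (hmax y)))

lemma lap_eq_zero_of_gradsq_eq_zero (hw : ∀ x y, 0 ≤ w x y) {f : V → ℝ} {x : V}
    (h : gradsq w f x = 0) : lap w f x = 0 := by
  rcases mul_eq_zero.mp h with hd | hsum
  · simp only [lap, hd, zero_mul]
  have hterm : ∀ y, w x y * (f x - f y) ^ 2 = 0 :=
    fun y => (Finset.sum_eq_zero_iff_of_nonneg fun y _ => mul_nonneg (hw x y) (sq_nonneg _)).mp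
      hsum y (Finset.mem_univ y)
  have hzero : ∀ y, w x y * (f y - f x) = 0 := fun y => by
    rcases mul_eq_zero.mp (hterm y) with hxy | hfxy
    · rw [hxy, zero_mul]
    · rw [sub_eq_zero.mp (pow_eq_zero_iff two_ne_zero |>.mp hfxy), sub_self, mul_zero]
  simp only [lap, hzero, Finset.sum_const_zero, mul_zero]

lemma lap_const_mul (c : ℝ) (g : V → ℝ) (x : V) :
    lap w (fun y => c * g y) x = c * lap w g x := by
  simp only [lap, ← mul_sub, mul_left_comm (w x _) c, ← Finset.mul_sum]
  ring

lemma gam_const_mul_right (f g : V → ℝ) (c : ℝ) (x : V) :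
    gam w f (fun y => c * g y) x = c * gam w f g x := by
  simp only [gam, mul_left_comm (f _) c, lap_const_mul]
  ring

lemma gam_self (f : V → ℝ) (x : V) : gam w f f x = gradsq w f x / 2 := by
  have hsum : ∑ y, w x y * (f y * f y - f x * f x) - 2 * (f x * ∑ y, w x y * (f y - f x))
      = ∑ y, w x y * (f x - f y) ^ 2 := by
    simp only [Finset.mul_sum, ← Finset.sum_sub_distrib]
    exact Finset.sum_congr rfl fun y _ => by ring
  simp only [gam, lap, gradsq, ← hsum]
  ring

lemma gam2_self_of_eigenfunction {f : V → ℝ} {lam : ℝ} (hf : ∀ x, -lap w f x = lam * f x)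
    (x : V) : gam2 w f f x = lap w (gam w f f) x / 2 + lam * gam w f f x := by
  have hlap : lap w f = fun y => -lam * f y := funext fun y => by linarith [hf y]
  have hgam : gam w f (lap w f) x = -lam * gam w f f x := by
    rw [hlap, gam_const_mul_right]
  simp only [gam2, hgam]
  ring

lemma exists_gam_self_pos_of_eigenfunction (hw : ∀ x y, 0 ≤ w x y) {f : V → ℝ} {lam : ℝ}
    (hlam : lam ≠ 0) (hf : ∀ x, -lap w f x = lam * f x) (hnc : ∃ x y, f x ≠ f y) :
    ∃ x, 0 < gam w f f x := by
  by_contra! hle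
  have hzero : ∀ x, f x = 0 := fun x => by
    have hgrad : gradsq w f x = 0 :=
      le_antisymm (by linarith [hle x, gam_self (w := w) f x]) (gradsq_nonneg hw f x)
    have := hf x
    rw [lap_eq_zero_of_gradsq_eq_zero hw hgrad, neg_zero] at this
    exact (mul_eq_zero.mp this.symm).resolve_left hlam
  obtain ⟨x, y, hxy⟩ := hnc
  exact hxy (by rw [hzero x, hzero y])

end

theorem ricci_le_eigenvalue_general {V : Type*} [Fintype V] (w : V → V → ℝ)
    (hnonneg : ∀ x y, 0 ≤ w x y)
    (m κ : ℝ) (hm : 0 < m) (hCD : CD w m κ)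
    (lam : ℝ) (hlam : lam ≠ 0) (f : V → ℝ)
    (hf : ∀ x, -lap w f x = lam * f x) (hnc : ∃ x y, f x ≠ f y) :
    κ ≤ lam := by
  obtain ⟨a, ha⟩ := exists_gam_self_pos_of_eigenfunction hnonneg hlam hf hnc
  have : Nonempty V := ⟨a⟩
  obtain ⟨x₀, hmax⟩ := Finite.exists_max (gam w f f)
  have hpos : 0 < gam w f f x₀ := ha.trans_le (hmax a)
  have hlapG : lap w (gam w f f) x₀ ≤ 0 := lap_nonpos_of_forall_le hnonneg hmax
  have hCD₀ := hCD f x₀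
  rw [gam2_self_of_eigenfunction hf] at hCD₀
  have hdim : 0 ≤ 1 / m * lap w f x₀ ^ 2 := by positivity
  exact le_of_mul_le_mul_right (by linarith) hpos

theorem ricci_le_eigenvalue {V : Type*} [Fintype V] (w : V → V → ℝ)
    (hsymm : ∀ x y, w x y = w y x) (hnonneg : ∀ x y, 0 ≤ w x y)
    (hloop : ∀ x, w x x = 0) (hdeg : ∀ x, 0 < deg w x)
    (hconn : (SimpleGraph.fromRel fun x y => 0 < w x y).Connected)
    (m κ : ℝ) (hm : 0 < m) (hCD : CD w m κ)
    (lam : ℝ) (hlam : lam ≠ 0) (f : V → ℝ)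
    (hf : ∀ x, -lap w f x = lam * f x) (hnc : ∃ x y, f x ≠ f y) :
    κ ≤ lam :=
  ricci_le_eigenvalue_general w hnonneg m κ hm hCD lam hlam f hf hnc
end
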